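/- arXiv:2411.14813 — 7 statements merged into one kernel-verified Lean document; each statement's English description precedes it below -/
import Mathlib

section
/- Let F : C ⥤ D be a left multiadjoint and let M be a left-cancellable composable class of morphisms in D. Then the restriction of F to a functor C_{F⁻¹(M)} ⥤ D_M reflects amalgamation of squares. -/
open CategoryTheory

universe w v u v' u'

variable {C : Type u} [Category.{v} C] {D : Type u'} [Category.{v'} D]

/-- An independence relation on a category: a class of (commuting) squares,
given by their four morphisms `X ⟶ A`, `X ⟶ B`, `A ⟶ M`, `B ⟶ M`. -/
def IndRel (C : Type u) [Category.{v} C] :=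
  ∀ ⦃X A B M : C⦄, (X ⟶ A) → (X ⟶ B) → (A ⟶ M) → (B ⟶ M) → Prop

/-- The lift of an independence relation along a functor. -/
def IndRel.lift (F : C ⥤ D) (R : IndRel D) : IndRel C :=
  fun _ _ _ _ xa xb am bm => R (F.map xa) (F.map xb) (F.map am) (F.map bm)

/-- `F` is a left multiadjoint: every object of `D` admits a family of morphisms
from `F`-images through which every morphism from an `F`-image factors via a
unique index and a unique morphism. -/
def IsLeftMultiadjoint (F : C ⥤ D) : Prop :=
  ∀ d : D, ∃ (I : Type w) (c : I → C) (e : ∀ i, F.obj (c i) ⟶ d),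
    ∀ (X : C) (f : F.obj X ⟶ d),
      ∃! p : (i : I) × (X ⟶ c i), F.map p.2 ≫ e p.1 = f

/-!
Factor the two legs `f : F M₁ ⟶ E`, `g : F M₂ ⟶ E` of the amalgamation in `D` through a
multi-universal family at `E`, as `F u ≫ eᵢ` and `F v ≫ eⱼ`. The morphism
`F am ≫ f = F am' ≫ g` then has the two factorizations `F (am ≫ u) ≫ eᵢ` and
`F (am' ≫ v) ≫ eⱼ`, so uniqueness forces `i = j` and `am ≫ u = am' ≫ v`; likewise
`bm ≫ u = bm' ≫ v`. Hence `u, v` amalgamate the squares in `C`, and `F u`, `F v` lie in `M`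
by left cancellation, since `F u ≫ eᵢ = f` and `F v ≫ eᵢ = g` do.
-/

def IsMultiUniversalFamily (F : C ⥤ D) {I : Type*} {c : I → C} {d : D}
    (e : ∀ i, F.obj (c i) ⟶ d) : Prop :=
  ∀ (X : C) (f : F.obj X ⟶ d), ∃! p : (i : I) × (X ⟶ c i), F.map p.2 ≫ e p.1 = f

theorem IsLeftMultiadjoint.exists_isMultiUniversalFamily {F : C ⥤ D}
    (hF : IsLeftMultiadjoint.{w} F) (d : D) :
    ∃ (I : Type w) (c : I → C) (e : ∀ i, F.obj (c i) ⟶ d), IsMultiUniversalFamily F e :=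
  hF d

namespace IsMultiUniversalFamily

variable {F : C ⥤ D} {I : Type*} {c : I → C} {d : D} {e : ∀ i, F.obj (c i) ⟶ d}

theorem exists_factor (he : IsMultiUniversalFamily F e) {X : C} (f : F.obj X ⟶ d) :
    ∃ (i : I) (u : X ⟶ c i), F.map u ≫ e i = f :=
  let ⟨⟨i, u⟩, hu, _⟩ := he X f
  ⟨i, u, hu⟩

theorem sigma_mk_eq_of_map_comp_eq (he : IsMultiUniversalFamily F e) {X : C} {i j : I}
    {u : X ⟶ c i} {v : X ⟶ c j} (h : F.map u ≫ e i = F.map v ≫ e j) :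
    (⟨i, u⟩ : (i : I) × (X ⟶ c i)) = ⟨j, v⟩ :=
  (he X _).unique h rfl

theorem eq_of_map_comp_eq (he : IsMultiUniversalFamily F e) {X : C} {i : I}
    {u v : X ⟶ c i} (h : F.map u ≫ e i = F.map v ≫ e i) : u = v :=
  eq_of_heq (Sigma.mk.inj_iff.mp (he.sigma_mk_eq_of_map_comp_eq h)).2

theorem exists_amalgamation (he : IsMultiUniversalFamily F e) {A B M₁ M₂ : C}
    (am : A ⟶ M₁) (bm : B ⟶ M₁) (am' : A ⟶ M₂) (bm' : B ⟶ M₂)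
    {f : F.obj M₁ ⟶ d} {g : F.obj M₂ ⟶ d}
    (ha : F.map am ≫ f = F.map am' ≫ g) (hb : F.map bm ≫ f = F.map bm' ≫ g) :
    ∃ (i : I) (u : M₁ ⟶ c i) (v : M₂ ⟶ c i), F.map u ≫ e i = f ∧ F.map v ≫ e i = g ∧
      am ≫ u = am' ≫ v ∧ bm ≫ u = bm' ≫ v := by
  obtain ⟨i, u, rfl⟩ := he.exists_factor f
  obtain ⟨j, v, rfl⟩ := he.exists_factor g
  simp only [← Category.assoc, ← F.map_comp] at ha hb
  obtain rfl : i = j := congrArg Sigma.fst (he.sigma_mk_eq_of_map_comp_eq ha)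
  exact ⟨i, u, v, rfl, rfl, he.eq_of_map_comp_eq ha, he.eq_of_map_comp_eq hb⟩

end IsMultiUniversalFamily

theorem left_multiadjoint_reflects_amalgamation
    (F : C ⥤ D) (hF : IsLeftMultiadjoint.{w} F)
    (Mm : MorphismProperty D)
    (hcancel : ∀ ⦃X Y Z : D⦄ (f : X ⟶ Y) (g : Y ⟶ Z), Mm (f ≫ g) → Mm f)
    {X A B M₁ M₂ : C}
    (am : A ⟶ M₁) (bm : B ⟶ M₁) (am' : A ⟶ M₂) (bm' : B ⟶ M₂)
    (hamalg : ∃ (E : D) (f : F.obj M₁ ⟶ E) (g : F.obj M₂ ⟶ E),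
      Mm f ∧ Mm g ∧ F.map am ≫ f = F.map am' ≫ g ∧ F.map bm ≫ f = F.map bm' ≫ g) :
    ∃ (E : C) (f : M₁ ⟶ E) (g : M₂ ⟶ E),
      Mm (F.map f) ∧ Mm (F.map g) ∧ am ≫ f = am' ≫ g ∧ bm ≫ f = bm' ≫ g := by
  obtain ⟨E, f, g, hf, hg, ha, hb⟩ := hamalg
  obtain ⟨I, c, e, he⟩ := hF.exists_isMultiUniversalFamily E
  obtain ⟨i, u, v, rfl, rfl, hu, hv⟩ := he.exists_amalgamation am bm am' bm' ha hb
  exact ⟨c i, u, v, hcancel _ _ hf, hcancel _ _ hg, hu, hv⟩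
end

section
/- Let F : C ⥤ D be a left multiadjoint, M a left-cancellable composable class of morphisms in D, and ⫝ an independence relation on D_M satisfying uniqueness. Then the lifted independence relation F⁻¹(⫝) on C_{F⁻¹(M)} satisfies uniqueness. -/
/-!
Amalgamate the `F`-images of the two squares in `D`, and factor both legs of the amalgam
through the universal family of its apex. Uniqueness of the factorization of the common
composite out of `A` forces both legs through the same member `e i`, and then reflects
the commutativity of the cocone back to `C`; left cancellation carries membership in `M`
from the legs to their factorizations.
-/

open CategoryTheory

universe w v u v' u'

variable {C : Type u} [Category.{v} C] {D : Type u'} [Category.{v'} D]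

def IsUniversalFamily (F : C ⥤ D) {d : D} {I : Type w} {c : I → C}
    (e : ∀ i, F.obj (c i) ⟶ d) : Prop :=
  ∀ (X : C) (f : F.obj X ⟶ d), ∃! p : (i : I) × (X ⟶ c i), F.map p.2 ≫ e p.1 = f

namespace IsUniversalFamily

variable {F : C ⥤ D} {d : D} {I : Type w} {c : I → C} {e : ∀ i, F.obj (c i) ⟶ d}

theorem sigma_eq_of_map_comp_eq (he : IsUniversalFamily F e) {X : C} {i j : I}
    (u : X ⟶ c i) (v : X ⟶ c j) (h : F.map u ≫ e i = F.map v ≫ e j) :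
    (⟨i, u⟩ : (i : I) × (X ⟶ c i)) = ⟨j, v⟩ :=
  (he X _).unique rfl h.symm

theorem exists_common_factorization (he : IsUniversalFamily F e) {A M₁ M₂ : C}
    (f : F.obj M₁ ⟶ d) (g : F.obj M₂ ⟶ d) (u : A ⟶ M₁) (v : A ⟶ M₂)
    (h : F.map u ≫ f = F.map v ≫ g) :
    ∃ (i : I) (f' : M₁ ⟶ c i) (g' : M₂ ⟶ c i), F.map f' ≫ e i = f ∧ F.map g' ≫ e i = g ∧
      ∀ ⦃B : C⦄ (u' : B ⟶ M₁) (v' : B ⟶ M₂), F.map u' ≫ f = F.map v' ≫ g →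
        u' ≫ f' = v' ≫ g' := by
  obtain ⟨⟨i, f'⟩, rfl, -⟩ := he M₁ f
  obtain ⟨⟨j, g'⟩, rfl, -⟩ := he M₂ g
  obtain ⟨rfl, -⟩ := Sigma.mk.inj_iff.mp <|
    he.sigma_eq_of_map_comp_eq (u ≫ f') (v ≫ g') (by simpa using h)
  refine ⟨i, f', g', rfl, rfl, fun B u' v' h' =>
    sigma_mk_injective (β := fun i => B ⟶ c i) ?_⟩
  exact he.sigma_eq_of_map_comp_eq (u' ≫ f') (v' ≫ g') (by simpa using h')

end IsUniversalFamily

theorem left_multiadjoint_lifts_uniqueness_general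
    (F : C ⥤ D) (hF : IsLeftMultiadjoint.{w} F)
    (Mm : MorphismProperty D)
    (hcancel : ∀ ⦃X Y Z : D⦄ (f : X ⟶ Y) (g : Y ⟶ Z), Mm (f ≫ g) → Mm f)
    (R : IndRel D)
    -- uniqueness of `⫝` on `D_M`
    (hU : ∀ ⦃X A B M₁ M₂ : D⦄ (xa : X ⟶ A) (xb : X ⟶ B)
      (am : A ⟶ M₁) (bm : B ⟶ M₁) (am' : A ⟶ M₂) (bm' : B ⟶ M₂),
      Mm xa → Mm xb → Mm am → Mm bm → Mm am' → Mm bm' →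
      xa ≫ am = xb ≫ bm → xa ≫ am' = xb ≫ bm' →
      R xa xb am bm → R xa xb am' bm' →
      ∃ (E : D) (f : M₁ ⟶ E) (g : M₂ ⟶ E),
        Mm f ∧ Mm g ∧ am ≫ f = am' ≫ g ∧ bm ≫ f = bm' ≫ g) :
    -- uniqueness of `F⁻¹(⫝)` on `C_{F⁻¹(M)}`
    ∀ ⦃X A B M₁ M₂ : C⦄ (xa : X ⟶ A) (xb : X ⟶ B)
      (am : A ⟶ M₁) (bm : B ⟶ M₁) (am' : A ⟶ M₂) (bm' : B ⟶ M₂),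
      Mm (F.map xa) → Mm (F.map xb) → Mm (F.map am) → Mm (F.map bm) →
      Mm (F.map am') → Mm (F.map bm') →
      xa ≫ am = xb ≫ bm → xa ≫ am' = xb ≫ bm' →
      R.lift F xa xb am bm → R.lift F xa xb am' bm' →
      ∃ (E : C) (f : M₁ ⟶ E) (g : M₂ ⟶ E),
        Mm (F.map f) ∧ Mm (F.map g) ∧ am ≫ f = am' ≫ g ∧ bm ≫ f = bm' ≫ g := by
  intro X A B M₁ M₂ xa xb am bm am' bm' hxa hxb ham hbm ham' hbm' hsq hsq' hR hR'
  obtain ⟨E, f, g, hf, hg, hA, hB⟩ := hU _ _ _ _ _ _ hxa hxb ham hbm ham' hbm'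
    (by rw [← F.map_comp, hsq, F.map_comp]) (by rw [← F.map_comp, hsq', F.map_comp]) hR hR'
  obtain ⟨I, c, e, he⟩ := hF E
  obtain ⟨i, f', g', rfl, rfl, hlift⟩ :=
    IsUniversalFamily.exists_common_factorization he f g am am' hA
  exact ⟨c i, f', g', hcancel _ _ hf, hcancel _ _ hg, hlift am am' hA, hlift bm bm' hB⟩

/-- Uniqueness lifts along a left multiadjoint: if `⫝` is an independence
relation on the wide subcategory `D_M` satisfying uniqueness, then the lifted
relation `F⁻¹(⫝)` on `C_{F⁻¹(M)}` satisfies uniqueness. -/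
theorem left_multiadjoint_lifts_uniqueness
    (F : C ⥤ D) (hF : IsLeftMultiadjoint.{w} F)
    (Mm : MorphismProperty D)
    (hcomp : ∀ ⦃X Y Z : D⦄ (f : X ⟶ Y) (g : Y ⟶ Z), Mm f → Mm g → Mm (f ≫ g))
    (hiso : ∀ ⦃X Y : D⦄ (f : X ⟶ Y), IsIso f → Mm f)
    (hcancel : ∀ ⦃X Y Z : D⦄ (f : X ⟶ Y) (g : Y ⟶ Z), Mm (f ≫ g) → Mm f)
    (R : IndRel D)
    -- uniqueness of `⫝` on `D_M`
    (hU : ∀ ⦃X A B M₁ M₂ : D⦄ (xa : X ⟶ A) (xb : X ⟶ B)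
      (am : A ⟶ M₁) (bm : B ⟶ M₁) (am' : A ⟶ M₂) (bm' : B ⟶ M₂),
      Mm xa → Mm xb → Mm am → Mm bm → Mm am' → Mm bm' →
      xa ≫ am = xb ≫ bm → xa ≫ am' = xb ≫ bm' →
      R xa xb am bm → R xa xb am' bm' →
      ∃ (E : D) (f : M₁ ⟶ E) (g : M₂ ⟶ E),
        Mm f ∧ Mm g ∧ am ≫ f = am' ≫ g ∧ bm ≫ f = bm' ≫ g) :
    -- uniqueness of `F⁻¹(⫝)` on `C_{F⁻¹(M)}`
    ∀ ⦃X A B M₁ M₂ : C⦄ (xa : X ⟶ A) (xb : X ⟶ B)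
      (am : A ⟶ M₁) (bm : B ⟶ M₁) (am' : A ⟶ M₂) (bm' : B ⟶ M₂),
      Mm (F.map xa) → Mm (F.map xb) → Mm (F.map am) → Mm (F.map bm) →
      Mm (F.map am') → Mm (F.map bm') →
      xa ≫ am = xb ≫ bm → xa ≫ am' = xb ≫ bm' →
      R.lift F xa xb am bm → R.lift F xa xb am' bm' →
      ∃ (E : C) (f : M₁ ⟶ E) (g : M₂ ⟶ E),
        Mm (F.map f) ∧ Mm (F.map g) ∧ am ≫ f = am' ≫ g ∧ bm ≫ f = bm' ≫ g :=
  left_multiadjoint_lifts_uniqueness_general F hF Mm hcancel R hU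
end

section
/- Let F : C ⥤ D be a faithful functor and ⫝ an independence relation on D satisfying invariance. If F admits 2-completions with respect to ⫝ and ⫝ satisfies existence, then the lifted relation F⁻¹(⫝) satisfies existence: every span in C can be completed to an F⁻¹(⫝)-independent commuting square. -/
open CategoryTheory

universe w v u v' u'

variable {C : Type u} [Category.{v} C] {D : Type u'} [Category.{v'} D]

/-- Basic existence: any commuting square whose left or bottom morphism is an
isomorphism is independent. -/
def IndRel.BasicExistence (R : IndRel D) : Prop :=
  ∀ ⦃X A B M : D⦄ (xa : X ⟶ A) (xb : X ⟶ B) (am : A ⟶ M) (bm : B ⟶ M),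
    xa ≫ am = xb ≫ bm → (IsIso xa ∨ IsIso xb) → R xa xb am bm

/-- Invariance: post-composing the ambient object of a commuting square along a
morphism preserves and reflects independence. -/
def IndRel.Invariance (R : IndRel D) : Prop :=
  ∀ ⦃X A B M N : D⦄ (xa : X ⟶ A) (xb : X ⟶ B) (am : A ⟶ M) (bm : B ⟶ M)
    (mn : M ⟶ N), xa ≫ am = xb ≫ bm →
    (R xa xb am bm ↔ R xa xb (am ≫ mn) (bm ≫ mn))

/-- `F` admits 1-completions: every morphism `F(A) ⟶ B` is "completed" by a
morphism `A ⟶ E` of `C` whose image factors through it. -/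
def Admits1Completions (F : C ⥤ D) : Prop :=
  ∀ (A : C) (B : D) (f : F.obj A ⟶ B),
    ∃ (E : C) (g : A ⟶ E) (h : B ⟶ F.obj E), F.map g = f ≫ h

/-- `F` admits 2-completions with respect to `⫝`: every `⫝`-independent
commuting square whose base span is in the image of `F` can be completed into
the image of `F`. -/
def Admits2Completions (F : C ⥤ D) (R : IndRel D) : Prop :=
  ∀ ⦃X A B : C⦄ ⦃D₀ : D⦄ (xa : X ⟶ A) (xb : X ⟶ B)
    (ad : F.obj A ⟶ D₀) (bd : F.obj B ⟶ D₀),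
    F.map xa ≫ ad = F.map xb ≫ bd →
    R (F.map xa) (F.map xb) ad bd →
    ∃ (E : C) (f : A ⟶ E) (g : B ⟶ E) (h : D₀ ⟶ F.obj E),
      F.map f = ad ≫ h ∧ F.map g = bd ≫ h

/-- Existence: every span can be completed to an independent commuting square. -/
def IndRel.Existence (R : IndRel D) : Prop :=
  ∀ ⦃X A B : D⦄ (xa : X ⟶ A) (xb : X ⟶ B),
    ∃ (M : D) (am : A ⟶ M) (bm : B ⟶ M), xa ≫ am = xb ≫ bm ∧ R xa xb am bm

theorem IndRel.Invariance.of_factor {R : IndRel D} (hinv : R.Invariance)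
    {X A B M N : D} {xa : X ⟶ A} {xb : X ⟶ B} {am : A ⟶ M} {bm : B ⟶ M}
    {an : A ⟶ N} {bn : B ⟶ N} (mn : M ⟶ N) (hcomm : xa ≫ am = xb ≫ bm)
    (han : an = am ≫ mn) (hbn : bn = bm ≫ mn) (hR : R xa xb am bm) :
    R xa xb an bn := by
  subst han hbn
  exact (hinv xa xb am bm mn hcomm).mp hR

theorem CategoryTheory.Functor.comm_of_map_factor (F : C ⥤ D) [F.Faithful]
    {X A B E : C} {M : D} {xa : X ⟶ A} {xb : X ⟶ B} {f : A ⟶ E} {g : B ⟶ E}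
    {am : F.obj A ⟶ M} {bm : F.obj B ⟶ M} (h : M ⟶ F.obj E)
    (hcomm : F.map xa ≫ am = F.map xb ≫ bm)
    (hf : F.map f = am ≫ h) (hg : F.map g = bm ≫ h) :
    xa ≫ f = xb ≫ g :=
  F.map_injective <| by
    rw [F.map_comp, F.map_comp, hf, hg, ← Category.assoc, hcomm, Category.assoc]

/-- If `F` is faithful, `⫝` satisfies invariance and existence, and `F` admits
2-completions, then the lifted relation `F⁻¹(⫝)` satisfies existence. -/
theorem admits2_lifts_existence (F : C ⥤ D) [F.Faithful] (R : IndRel D)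
    (hinv : R.Invariance) (hex : R.Existence) (h2 : Admits2Completions F R) :
    ∀ ⦃X A B : C⦄ (xa : X ⟶ A) (xb : X ⟶ B),
      ∃ (M : C) (am : A ⟶ M) (bm : B ⟶ M),
        xa ≫ am = xb ≫ bm ∧ R.lift F xa xb am bm := by
  intro X A B xa xb
  obtain ⟨M, am, bm, hcomm, hR⟩ := hex (F.map xa) (F.map xb)
  obtain ⟨E, f, g, h, hf, hg⟩ := h2 xa xb am bm hcomm hR
  exact ⟨E, f, g, F.comm_of_map_factor h hcomm hf hg,
    hinv.of_factor h hcomm hf hg hR⟩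
end

section
/- Let F : C ⥤ D be a faithful functor and ⫝ an independence relation on D satisfying invariance and uniqueness. Suppose F admits 1-completions and that the lifted relation F⁻¹(⫝) satisfies existence. Then F admits 2-completions with respect to ⫝. -/
open CategoryTheory

universe w v u v' u'

variable {C : Type u} [Category.{v} C] {D : Type u'} [Category.{v'} D]

/-- Uniqueness: any two independent squares sharing the same base span can be
amalgamated. -/
def IndRel.Uniqueness (R : IndRel D) : Prop :=
  ∀ ⦃X A B M₁ M₂ : D⦄ (xa : X ⟶ A) (xb : X ⟶ B)
    (am : A ⟶ M₁) (bm : B ⟶ M₁) (am' : A ⟶ M₂) (bm' : B ⟶ M₂),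
    xa ≫ am = xb ≫ bm → xa ≫ am' = xb ≫ bm' →
    R xa xb am bm → R xa xb am' bm' →
    ∃ (E : D) (f : M₁ ⟶ E) (g : M₂ ⟶ E),
      am ≫ f = am' ≫ g ∧ bm ≫ f = bm' ≫ g

/-!
Given an independent square `F(A) → D₀ ← F(B)` over `F(X)`, use existence for `F⁻¹(⫝)` to get an
independent square `A → M ← B` in `C`. Uniqueness amalgamates its image with the given square in
some `E₀`, and a 1-completion of `F(M) → E₀` carries the amalgam back into the image of `F`.
-/

theorem Admits1Completions.exists_completion_of_amalgam {F : C ⥤ D} (h1 : Admits1Completions F)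
    {A B M : C} {D₀ E₀ : D} (am : A ⟶ M) (bm : B ⟶ M) (ad : F.obj A ⟶ D₀) (bd : F.obj B ⟶ D₀)
    (me : F.obj M ⟶ E₀) (de : D₀ ⟶ E₀) (ha : F.map am ≫ me = ad ≫ de)
    (hb : F.map bm ≫ me = bd ≫ de) :
    ∃ (E : C) (f : A ⟶ E) (g : B ⟶ E) (h : D₀ ⟶ F.obj E),
      F.map f = ad ≫ h ∧ F.map g = bd ≫ h := by
  obtain ⟨E, g, h, hg⟩ := h1 M E₀ me
  refine ⟨E, am ≫ g, bm ≫ g, de ≫ h, ?_, ?_⟩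
  · rw [F.map_comp, hg, reassoc_of% ha]
  · rw [F.map_comp, hg, reassoc_of% hb]

theorem admits1_existence_implies_admits2_general (F : C ⥤ D) (R : IndRel D)
    (huniq : R.Uniqueness) (h1 : Admits1Completions F)
    (hexlift : ∀ ⦃X A B : C⦄ (xa : X ⟶ A) (xb : X ⟶ B),
      ∃ (M : C) (am : A ⟶ M) (bm : B ⟶ M),
        xa ≫ am = xb ≫ bm ∧ R.lift F xa xb am bm) :
    Admits2Completions F R := by
  intro X A B D₀ xa xb ad bd hcomm hR
  obtain ⟨M, am, bm, hM, hMR⟩ := hexlift xa xb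
  have hFM : F.map xa ≫ F.map am = F.map xb ≫ F.map bm := by
    simp only [← F.map_comp, hM]
  obtain ⟨E₀, me, de, ha, hb⟩ := huniq _ _ _ _ ad bd hFM hcomm hMR hR
  exact h1.exists_completion_of_amalgam am bm ad bd me de ha hb

/-- If `F` is faithful, `⫝` satisfies invariance and uniqueness, `F` admits
1-completions, and the lifted relation `F⁻¹(⫝)` satisfies existence, then `F`
admits 2-completions with respect to `⫝`. -/
theorem admits1_existence_implies_admits2 (F : C ⥤ D) [F.Faithful] (R : IndRel D)
    (hinv : R.Invariance) (huniq : R.Uniqueness) (h1 : Admits1Completions F)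
    (hexlift : ∀ ⦃X A B : C⦄ (xa : X ⟶ A) (xb : X ⟶ B),
      ∃ (M : C) (am : A ⟶ M) (bm : B ⟶ M),
        xa ≫ am = xb ≫ bm ∧ R.lift F xa xb am bm) :
    Admits2Completions F R :=
  admits1_existence_implies_admits2_general F R huniq h1 hexlift
end

section
/- Let C be a category with a factorization system (E, M) where M consists of monomorphisms. Given a commuting square with morphisms X→A, X→B, a : A → D in M and b : B → D in M, and suppose the multipushout of the span A ← X → B exists. Let P be the instance of the multipushout admitting a morphism p : P → D compatible with a and b, and let P ↠ J ↪ D be the (E,M)-factorization of p. Then J, with its M-morphism into D, is the join A ∨ B of the subobjects A and B of D in the wide subcategory C_M. -/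
/-!
The cocone `(a, b)` factors through the multipushout only via `p : P ⟶ D`. If `(a, b)`
also factors through an `M`-subobject `e : E₀ ⟶ D`, then, `e` being monic, the factoring
maps `A ⟶ E₀ ← B` form a cocone, which factors through some instance of the
multipushout; composing with `e` and using uniqueness, that instance is `P` and the
factorization is `p`. So `p` factors through `e`, and orthogonality of `P ↠ J` against
`e` yields `J ⟶ E₀`.
-/

open CategoryTheory

universe w v u

variable {C : Type u} [Category.{v} C]

/-- Multipushout data for a span `A ← X → B`: a family of cocones through
exactly one of which every cocone factors uniquely. -/
structure Multipushout {X A B : C} (xa : X ⟶ A) (xb : X ⟶ B) where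
  ι : Type w
  pt : ι → C
  inl : ∀ i, A ⟶ pt i
  inr : ∀ i, B ⟶ pt i
  cocone : ∀ i, xa ≫ inl i = xb ≫ inr i
  universal : ∀ ⦃Q : C⦄ (q : A ⟶ Q) (r : B ⟶ Q), xa ≫ q = xb ≫ r →
    ∃! p : (i : ι) × (pt i ⟶ Q), inl p.1 ≫ p.2 = q ∧ inr p.1 ≫ p.2 = r

namespace Multipushout

variable {X A B : C} {xa : X ⟶ A} {xb : X ⟶ B}

theorem sigma_eq_of_factors (MP : Multipushout xa xb) {Q : C} {i j : MP.ι}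
    (p : MP.pt i ⟶ Q) (q : MP.pt j ⟶ Q)
    (hl : MP.inl j ≫ q = MP.inl i ≫ p) (hr : MP.inr j ≫ q = MP.inr i ≫ p) :
    (⟨j, q⟩ : (k : MP.ι) × (MP.pt k ⟶ Q)) = ⟨i, p⟩ :=
  (MP.universal _ _ (by rw [reassoc_of% MP.cocone i])).unique ⟨hl, hr⟩ ⟨rfl, rfl⟩

theorem exists_factor_through_mono (MP : Multipushout xa xb) {i : MP.ι} {Q E₀ : C}
    (p : MP.pt i ⟶ Q) (e : E₀ ⟶ Q) [Mono e] (fa : A ⟶ E₀) (fb : B ⟶ E₀)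
    (ha : fa ≫ e = MP.inl i ≫ p) (hb : fb ≫ e = MP.inr i ≫ p) :
    ∃ q : MP.pt i ⟶ E₀, q ≫ e = p := by
  have hcocone : xa ≫ fa = xb ≫ fb := by
    rw [← cancel_mono e, Category.assoc, Category.assoc, ha, hb, reassoc_of% MP.cocone i]
  obtain ⟨⟨j, q⟩, ⟨hqa, hqb⟩, -⟩ := MP.universal fa fb hcocone
  have hsigma := MP.sigma_eq_of_factors p (q ≫ e)
    (by rw [reassoc_of% hqa, ha]) (by rw [reassoc_of% hqb, hb])
  obtain ⟨rfl, hq⟩ := Sigma.mk.inj_iff.mp hsigma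
  exact ⟨q, eq_of_heq hq⟩

end Multipushout

theorem multipushout_factorization_computes_join_general
    (Em Mm : MorphismProperty C)
    (hMmono : ∀ ⦃X Y : C⦄ (f : X ⟶ Y), Mm f → Mono f)
    (hMcancel : ∀ ⦃X Y Z : C⦄ (f : X ⟶ Y) (g : Y ⟶ Z), Mm (f ≫ g) → Mm g → Mm f)
    (hlift : ∀ ⦃X Y Z W : C⦄ (e : X ⟶ Y) (m : Z ⟶ W) (u : X ⟶ Z) (v : Y ⟶ W),
      Em e → Mm m → u ≫ m = e ≫ v → ∃ d : Y ⟶ Z, e ≫ d = u ∧ d ≫ m = v)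
    {X A B D : C} (xa : X ⟶ A) (xb : X ⟶ B) (a : A ⟶ D) (b : B ⟶ D)
    (hMa : Mm a) (hMb : Mm b)
    (MP : Multipushout.{w} xa xb)
    (i : MP.ι) (p : MP.pt i ⟶ D)
    (hpa : MP.inl i ≫ p = a) (hpb : MP.inr i ≫ p = b)
    {J : C} (ep : MP.pt i ⟶ J) (mj : J ⟶ D)
    (hep : Em ep) (hmj : Mm mj) (hfactp : ep ≫ mj = p) :
    Mm (MP.inl i ≫ ep) ∧ (MP.inl i ≫ ep) ≫ mj = a ∧
    Mm (MP.inr i ≫ ep) ∧ (MP.inr i ≫ ep) ≫ mj = b ∧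
    ∀ ⦃E₀ : C⦄ (e : E₀ ⟶ D) (fa : A ⟶ E₀) (fb : B ⟶ E₀),
      Mm e → fa ≫ e = a → fb ≫ e = b →
      ∃ u : J ⟶ E₀, Mm u ∧ u ≫ e = mj := by
  have hja : (MP.inl i ≫ ep) ≫ mj = a := by rw [Category.assoc, hfactp, hpa]
  have hjb : (MP.inr i ≫ ep) ≫ mj = b := by rw [Category.assoc, hfactp, hpb]
  refine ⟨hMcancel _ _ (hja ▸ hMa) hmj, hja, hMcancel _ _ (hjb ▸ hMb) hmj, hjb, ?_⟩
  intro E₀ e fa fb hMe hfa hfb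
  have := hMmono e hMe
  obtain ⟨q, hq⟩ := MP.exists_factor_through_mono p e fa fb (hfa.trans hpa.symm)
    (hfb.trans hpb.symm)
  obtain ⟨u, -, hu⟩ := hlift ep e q mj hep hMe (hq.trans hfactp.symm)
  exact ⟨u, hMcancel _ _ (hu ▸ hmj) hMe, hu⟩

/-- Computing binary joins of subobjects in `C_M` from a factorization system
`(E, M)` with `M` consisting of monomorphisms: given a commuting square with
`a : A ⟶ D` and `b : B ⟶ D` in `M`, let `P` be the instance of the multipushout
of the span admitting a morphism `p` to `D`, and factor `p` as an `E`-morphism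
followed by an `M`-morphism `mj : J ⟶ D`. Then `J` is the join `A ∨ B` of the
subobjects `A`, `B` of `D` in `C_M`: `a` and `b` factor through `mj` via
`M`-morphisms, and `J` is least among such `M`-subobjects. -/
theorem multipushout_factorization_computes_join
    (Em Mm : MorphismProperty C)
    (hMmono : ∀ ⦃X Y : C⦄ (f : X ⟶ Y), Mm f → Mono f)
    (hMcomp : ∀ ⦃X Y Z : C⦄ (f : X ⟶ Y) (g : Y ⟶ Z), Mm f → Mm g → Mm (f ≫ g))
    (hMiso : ∀ ⦃X Y : C⦄ (f : X ⟶ Y), IsIso f → Mm f)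
    (hMcancel : ∀ ⦃X Y Z : C⦄ (f : X ⟶ Y) (g : Y ⟶ Z), Mm (f ≫ g) → Mm g → Mm f)
    (hfact : ∀ ⦃X Y : C⦄ (f : X ⟶ Y),
      ∃ (Z : C) (e : X ⟶ Z) (m : Z ⟶ Y), Em e ∧ Mm m ∧ e ≫ m = f)
    (hlift : ∀ ⦃X Y Z W : C⦄ (e : X ⟶ Y) (m : Z ⟶ W) (u : X ⟶ Z) (v : Y ⟶ W),
      Em e → Mm m → u ≫ m = e ≫ v → ∃ d : Y ⟶ Z, e ≫ d = u ∧ d ≫ m = v)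
    {X A B D : C} (xa : X ⟶ A) (xb : X ⟶ B) (a : A ⟶ D) (b : B ⟶ D)
    (hMa : Mm a) (hMb : Mm b) (hsq : xa ≫ a = xb ≫ b)
    (MP : Multipushout.{w} xa xb)
    (i : MP.ι) (p : MP.pt i ⟶ D)
    (hpa : MP.inl i ≫ p = a) (hpb : MP.inr i ≫ p = b)
    {J : C} (ep : MP.pt i ⟶ J) (mj : J ⟶ D)
    (hep : Em ep) (hmj : Mm mj) (hfactp : ep ≫ mj = p) :
    Mm (MP.inl i ≫ ep) ∧ (MP.inl i ≫ ep) ≫ mj = a ∧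
    Mm (MP.inr i ≫ ep) ∧ (MP.inr i ≫ ep) ≫ mj = b ∧
    ∀ ⦃E₀ : C⦄ (e : E₀ ⟶ D) (fa : A ⟶ E₀) (fb : B ⟶ E₀),
      Mm e → fa ≫ e = a → fb ≫ e = b →
      ∃ u : J ⟶ E₀, Mm u ∧ u ≫ e = mj :=
  multipushout_factorization_computes_join_general Em Mm hMmono hMcancel hlift xa xb a b hMa hMb MP
    i p hpa hpb ep mj hep hmj hfactp
end

section
/- Let F : C ⥤ D be a faithful functor, and suppose ⫝ is an independence relation on D satisfying invariance and strong 3-amalgamation. If F admits 3-completions with respect to ⫝, then the lifted relation F⁻¹(⫝) satisfies strong 3-amalgamation. -/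
open CategoryTheory

universe w v u v' u'

variable {C : Type u} [Category.{v} C] {D : Type u'} [Category.{v'} D]

/-- Strong 3-amalgamation: every independent horn can be completed to a
commuting cube all of whose faces are independent squares. -/
def IndRel.Strong3Amalgamation {E : Type*} [Category E] (R : IndRel E) : Prop :=
  ∀ ⦃M₀ A B X N₁ N₂ N₃ : E⦄
    (ma : M₀ ⟶ A) (mb : M₀ ⟶ B) (mc : M₀ ⟶ X)
    (an1 : A ⟶ N₁) (bn1 : B ⟶ N₁) (an2 : A ⟶ N₂) (cn2 : X ⟶ N₂)
    (bn3 : B ⟶ N₃) (cn3 : X ⟶ N₃),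
    ma ≫ an1 = mb ≫ bn1 → ma ≫ an2 = mc ≫ cn2 → mb ≫ bn3 = mc ≫ cn3 →
    R ma mb an1 bn1 → R ma mc an2 cn2 → R mb mc bn3 cn3 →
    ∃ (N : E) (n1 : N₁ ⟶ N) (n2 : N₂ ⟶ N) (n3 : N₃ ⟶ N),
      an1 ≫ n1 = an2 ≫ n2 ∧ bn1 ≫ n1 = bn3 ≫ n3 ∧ cn2 ≫ n2 = cn3 ≫ n3 ∧
      R an1 an2 n1 n2 ∧ R bn1 bn3 n1 n3 ∧ R cn2 cn3 n2 n3

/-- `F` admits 3-completions with respect to `⫝`: every `⫝`-independent cube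
whose seven non-terminal vertices (and the morphisms among them) are images of
`F` can be completed into the image of `F`. -/
def Admits3Completions (F : C ⥤ D) (R : IndRel D) : Prop :=
  ∀ ⦃M₀ A B X N₁ N₂ N₃ : C⦄ ⦃N : D⦄
    (ma : M₀ ⟶ A) (mb : M₀ ⟶ B) (mc : M₀ ⟶ X)
    (an1 : A ⟶ N₁) (bn1 : B ⟶ N₁) (an2 : A ⟶ N₂) (cn2 : X ⟶ N₂)
    (bn3 : B ⟶ N₃) (cn3 : X ⟶ N₃)
    (m1 : F.obj N₁ ⟶ N) (m2 : F.obj N₂ ⟶ N) (m3 : F.obj N₃ ⟶ N),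
    ma ≫ an1 = mb ≫ bn1 → ma ≫ an2 = mc ≫ cn2 → mb ≫ bn3 = mc ≫ cn3 →
    F.map an1 ≫ m1 = F.map an2 ≫ m2 →
    F.map bn1 ≫ m1 = F.map bn3 ≫ m3 →
    F.map cn2 ≫ m2 = F.map cn3 ≫ m3 →
    R (F.map ma) (F.map mb) (F.map an1) (F.map bn1) →
    R (F.map ma) (F.map mc) (F.map an2) (F.map cn2) →
    R (F.map mb) (F.map mc) (F.map bn3) (F.map cn3) →
    R (F.map an1) (F.map an2) m1 m2 →
    R (F.map bn1) (F.map bn3) m1 m3 →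
    R (F.map cn2) (F.map cn3) m2 m3 →
    ∃ (Nstar : C) (n1 : N₁ ⟶ Nstar) (n2 : N₂ ⟶ Nstar) (n3 : N₃ ⟶ Nstar)
      (h : N ⟶ F.obj Nstar),
      F.map n1 = m1 ≫ h ∧ F.map n2 = m2 ≫ h ∧ F.map n3 = m3 ≫ h

/-! Amalgamate the `F`-image of the horn in `D`; the 3-completion then maps the terminal
vertex of that cube into some `F.obj N*` by `h`. Each face of the cube over `N*` is the
`D`-face followed by `h`, so it commutes after applying `F`, hence in `C` by faithfulness, and
it is independent by invariance. -/

theorem CategoryTheory.Functor.commSq_of_map (F : C ⥤ D) [F.Faithful] {W X Y Z : C}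
    {f : W ⟶ X} {g : W ⟶ Y} {h : X ⟶ Z} {i : Y ⟶ Z}
    (s : CommSq (F.map f) (F.map g) (F.map h) (F.map i)) : CommSq f g h i :=
  ⟨F.map_injective (by simpa only [F.map_comp] using s.w)⟩

namespace IndRel

theorem Invariance.comp_right {R : IndRel D} (hinv : R.Invariance) {X A B M N : D}
    {xa : X ⟶ A} {xb : X ⟶ B} {am : A ⟶ M} {bm : B ⟶ M} (s : CommSq xa xb am bm)
    (r : R xa xb am bm) (mn : M ⟶ N) : R xa xb (am ≫ mn) (bm ≫ mn) :=
  (hinv xa xb am bm mn s.w).mp r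

theorem commSq_and_lift_of_map_eq_comp (F : C ⥤ D) [F.Faithful] {R : IndRel D}
    (hinv : R.Invariance) {W X Y Z : C} {N : D} {a₁ : W ⟶ X} {a₂ : W ⟶ Y}
    {n₁ : X ⟶ Z} {n₂ : Y ⟶ Z} {m₁ : F.obj X ⟶ N} {m₂ : F.obj Y ⟶ N} {h : N ⟶ F.obj Z}
    (e₁ : F.map n₁ = m₁ ≫ h) (e₂ : F.map n₂ = m₂ ≫ h)
    (s : CommSq (F.map a₁) (F.map a₂) m₁ m₂) (r : R (F.map a₁) (F.map a₂) m₁ m₂) :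
    CommSq a₁ a₂ n₁ n₂ ∧ R.lift F a₁ a₂ n₁ n₂ := by
  have hs : CommSq (F.map a₁) (F.map a₂) (F.map n₁) (F.map n₂) :=
    ⟨by rw [e₁, e₂, reassoc_of% s.w]⟩
  refine ⟨F.commSq_of_map hs, ?_⟩
  change R (F.map a₁) (F.map a₂) (F.map n₁) (F.map n₂)
  rw [e₁, e₂]
  exact hinv.comp_right s r h

end IndRel

/-- If `F` is faithful, `⫝` satisfies invariance and strong 3-amalgamation, and
`F` admits 3-completions, then `F⁻¹(⫝)` satisfies strong 3-amalgamation. -/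
theorem admits3_lifts_strong3Amalgamation (F : C ⥤ D) [F.Faithful]
    (R : IndRel D) (hinv : R.Invariance)
    (h3 : R.Strong3Amalgamation) (hc : Admits3Completions F R) :
    (R.lift F).Strong3Amalgamation := by
  intro M₀ A B X N₁ N₂ N₃ ma mb mc an1 bn1 an2 cn2 bn3 cn3 w₁ w₂ w₃ r₁ r₂ r₃
  obtain ⟨N, m1, m2, m3, c12, c13, c23, s12, s13, s23⟩ :=
    h3 _ _ _ _ _ _ _ _ _ (F.map_commSq ⟨w₁⟩).w (F.map_commSq ⟨w₂⟩).w (F.map_commSq ⟨w₃⟩).w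
      r₁ r₂ r₃
  obtain ⟨Nstar, n1, n2, n3, h, e1, e2, e3⟩ :=
    hc ma mb mc an1 bn1 an2 cn2 bn3 cn3 m1 m2 m3 w₁ w₂ w₃ c12 c13 c23 r₁ r₂ r₃ s12 s13 s23
  obtain ⟨f12, i12⟩ := IndRel.commSq_and_lift_of_map_eq_comp F hinv e1 e2 ⟨c12⟩ s12
  obtain ⟨f13, i13⟩ := IndRel.commSq_and_lift_of_map_eq_comp F hinv e1 e3 ⟨c13⟩ s13
  obtain ⟨f23, i23⟩ := IndRel.commSq_and_lift_of_map_eq_comp F hinv e2 e3 ⟨c23⟩ s23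
  exact ⟨Nstar, n1, n2, n3, f12.w, f13.w, f23.w, i12, i13, i23⟩
end

section
/- In the category of sets with injective maps, the class of pullback squares forms an independence relation satisfying uniqueness: given two commuting squares of injections with the same base span X → A, X → B, cocone objects M and M', such that both squares are pullbacks (i.e. A ∩ B = X inside M and inside M'), there exist a set E and injections M → E, M' → E making the combined diagram commute. -/
/-!
Glue `M` and `M'` along the partial bijection that sends `am a ↦ am' a` and `bm b ↦ bm' b`.
It is well defined and injective because an element of `M` lying in both images comes from
`X` (pullback condition), so by the other commuting square its two candidate images in `M'`
agree; symmetrically for `M'`. Any partial bijection between two sets is realised by a pair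
of injections into `M ⊕ M'`: send `M` by `inl`, and send `M'` through the inverse of the
partial bijection where defined and by `inr` elsewhere.
-/

universe u

open Function Relator

theorem exists_injective_amalgam_of_biUnique {M M' : Type u} (R : M → M' → Prop)
    (hR : BiUnique R) :
    ∃ (E : Type u) (f : M → E) (g : M' → E),
      Injective f ∧ Injective g ∧ ∀ m n, R m n → f m = g n := by
  classical
  let g : M' → M ⊕ M' := fun n => if h : ∃ m, R m n then .inl h.choose else .inr n
  have hg_of_rel {m n} (h : R m n) : g n = .inl m := by
    have hex : ∃ m, R m n := ⟨m, h⟩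
    simp only [g, dif_pos hex, hR.1 hex.choose_spec h]
  refine ⟨M ⊕ M', .inl, g, Sum.inl_injective, fun n₁ n₂ h => ?_,
    fun m n h => (hg_of_rel h).symm⟩
  by_cases h₁ : ∃ m, R m n₁ <;> by_cases h₂ : ∃ m, R m n₂
  · obtain ⟨m₁, hm₁⟩ := h₁
    obtain ⟨m₂, hm₂⟩ := h₂
    rw [hg_of_rel hm₁, hg_of_rel hm₂, Sum.inl.injEq] at h
    exact hR.2 hm₁ (h ▸ hm₂)
  all_goals simp_all [g]

section Square

variable {X A B M M' : Type u} (xa : X → A) (xb : X → B) (am : A → M) (bm : B → M)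
  (am' : A → M') (bm' : B → M')

def SquareRel (m : M) (m' : M') : Prop :=
  (∃ a, am a = m ∧ am' a = m') ∨ (∃ b, bm b = m ∧ bm' b = m')

theorem squareRel_flip :
    flip (SquareRel am' bm' am bm) = SquareRel am bm am' bm' := by
  ext m m'
  simp only [flip, SquareRel, and_comm]

variable {xa xb am bm am' bm'}

theorem eq_of_pullback_of_comm
    (hpb : ∀ (a : A) (b : B), am a = bm b → ∃ x, xa x = a ∧ xb x = b)
    (hsq' : am' ∘ xa = bm' ∘ xb) {a : A} {b : B} (h : am a = bm b) : am' a = bm' b := by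
  obtain ⟨x, rfl, rfl⟩ := hpb a b h
  exact congrFun hsq' x

theorem SquareRel.rightUnique (ham : Injective am) (hbm : Injective bm)
    (hcross : ∀ (a : A) (b : B), am a = bm b → am' a = bm' b) :
    RightUnique (SquareRel am bm am' bm') := by
  rintro m _ _ (⟨a₁, rfl, rfl⟩ | ⟨b₁, rfl, rfl⟩) (⟨a₂, h, rfl⟩ | ⟨b₂, h, rfl⟩)
  · rw [ham h]
  · exact hcross a₁ b₂ h.symm
  · exact (hcross a₂ b₁ h).symm
  · rw [hbm h]

end Square

theorem set_pullback_squares_uniqueness_general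
    {X A B M M' : Type u}
    (xa : X → A) (xb : X → B) (am : A → M) (bm : B → M)
    (am' : A → M') (bm' : B → M')
    (ham : Function.Injective am) (hbm : Function.Injective bm)
    (ham' : Function.Injective am') (hbm' : Function.Injective bm')
    (hsq : am ∘ xa = bm ∘ xb) (hsq' : am' ∘ xa = bm' ∘ xb)
    (hpb : ∀ (a : A) (b : B), am a = bm b → ∃ x, xa x = a ∧ xb x = b)
    (hpb' : ∀ (a : A) (b : B), am' a = bm' b → ∃ x, xa x = a ∧ xb x = b) :
    ∃ (E : Type u) (f : M → E) (g : M' → E),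
      Function.Injective f ∧ Function.Injective g ∧
      f ∘ am = g ∘ am' ∧ f ∘ bm = g ∘ bm' := by
  have hright : RightUnique (SquareRel am bm am' bm') :=
    SquareRel.rightUnique ham hbm fun _ _ => eq_of_pullback_of_comm hpb hsq'
  have hleft : LeftUnique (SquareRel am bm am' bm') := by
    rw [← squareRel_flip]
    exact fun _ _ _ h₁ h₂ =>
      SquareRel.rightUnique ham' hbm' (fun _ _ => eq_of_pullback_of_comm hpb' hsq) h₁ h₂
  obtain ⟨E, f, g, hf, hg, hfg⟩ :=
    exists_injective_amalgam_of_biUnique (SquareRel am bm am' bm') ⟨hleft, hright⟩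
  exact ⟨E, f, g, hf, hg, funext fun a => hfg _ _ (.inl ⟨a, rfl, rfl⟩),
    funext fun b => hfg _ _ (.inr ⟨b, rfl, rfl⟩)⟩

/-- In the category of sets and injective maps, pullback squares satisfy
uniqueness: two pullback squares of injections over the same base span can be
amalgamated by injections into a common set. -/
theorem set_pullback_squares_uniqueness
    {X A B M M' : Type u}
    (xa : X → A) (xb : X → B) (am : A → M) (bm : B → M)
    (am' : A → M') (bm' : B → M')
    (hxa : Function.Injective xa) (hxb : Function.Injective xb)
    (ham : Function.Injective am) (hbm : Function.Injective bm)
    (ham' : Function.Injective am') (hbm' : Function.Injective bm')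
    (hsq : am ∘ xa = bm ∘ xb) (hsq' : am' ∘ xa = bm' ∘ xb)
    (hpb : ∀ (a : A) (b : B), am a = bm b → ∃ x, xa x = a ∧ xb x = b)
    (hpb' : ∀ (a : A) (b : B), am' a = bm' b → ∃ x, xa x = a ∧ xb x = b) :
    ∃ (E : Type u) (f : M → E) (g : M' → E),
      Function.Injective f ∧ Function.Injective g ∧
      f ∘ am = g ∘ am' ∧ f ∘ bm = g ∘ bm' :=
  set_pullback_squares_uniqueness_general xa xb am bm am' bm' ham hbm ham' hbm' hsq hsq' hpb hpb'
end
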